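/- Fix α > 1 and γ ∈ [−1,1]. Let F(x) = 1 − x^{−α} for x ≥ 1 and F(x) = 0 for x < 1 (the Pareto distribution with tail index α), and let (X_1, X_2) be a random vector whose joint cumulative distribution function is the bivariate EFGM distribution H(x_1, x_2) = F(x_1)·F(x_2)·(1 + γ·(1 − F(x_1))·(1 − F(x_2))). Then there exists q_0 ∈ (0,1) such that for all loss probabilities q ∈ (0, q_0), VaR_q((X_1 + X_2)/2) < VaR_q(X_1): for sufficiently small loss probability, diversifying two EFGM-dependent Pareto risks with tail index α > 1 strictly decreases the Value-at-Risk. -/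

import Mathlib

open MeasureTheory ProbabilityTheory

/-- The Pareto distribution function with tail index `α`:
`F(x) = 1 − x^(−α)` for `x ≥ 1`, and `0` for `x < 1`. -/
noncomputable def paretoCDF (α x : ℝ) : ℝ :=
  if 1 ≤ x then 1 - x ^ (-α) else 0

/-- Value-at-Risk of a random variable `X` at loss probability `q`:
`VaR_q(X) = inf {x | P(X > x) ≤ q}`. -/
noncomputable def lossVaR {Ω : Type*} [MeasurableSpace Ω] (μ : Measure Ω)
    (X : Ω → ℝ) (q : ℝ) : ℝ :=
  sInf {x : ℝ | (μ {ω | x < X ω}).toReal ≤ q}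

open Filter Topology

lemma paretoCDF_of_ge {α x : ℝ} (hx : 1 ≤ x) : paretoCDF α x = 1 - x ^ (-α) :=
  if_pos hx

lemma paretoCDF_of_lt {α x : ℝ} (hx : x < 1) : paretoCDF α x = 0 :=
  if_neg (not_le.mpr hx)

lemma paretoCDF_nonneg {α : ℝ} (hα : 0 < α) (x : ℝ) : 0 ≤ paretoCDF α x := by
  unfold paretoCDF
  split_ifs with h
  · have : x ^ (-α) ≤ 1 := by
      rw [← Real.rpow_zero x]
      exact Real.rpow_le_rpow_of_exponent_le h (by linarith)
    linarith
  · exact le_refl _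

lemma paretoCDF_le_one {α : ℝ} (hα : 0 < α) (x : ℝ) : paretoCDF α x ≤ 1 := by
  unfold paretoCDF
  split_ifs with h
  · have : 0 ≤ x ^ (-α) := Real.rpow_nonneg (by linarith) _
    linarith
  · norm_num

lemma tendsto_paretoCDF_atTop {α : ℝ} (hα : 0 < α) :
    Tendsto (fun n : ℕ => paretoCDF α n) atTop (𝓝 1) := by
  have h1 : Tendsto (fun n : ℕ => (n : ℝ) ^ (-α)) atTop (𝓝 0) :=
    (tendsto_rpow_neg_atTop hα).comp tendsto_natCast_atTop_atTop
  have h2 : Tendsto (fun n : ℕ => 1 - (n : ℝ) ^ (-α)) atTop (𝓝 1) := by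
    simpa using tendsto_const_nhds.sub h1
  refine h2.congr' ?_
  filter_upwards [eventually_ge_atTop 1] with n hn
  rw [paretoCDF_of_ge (by exact_mod_cast hn)]

lemma marginal_eq {Ω : Type*} [MeasurableSpace Ω] (μ : Measure Ω) [IsProbabilityMeasure μ]
    {α γ : ℝ} (hα : 0 < α) (X₁ X₂ : Ω → ℝ)
    (hcdf : ∀ x₁ x₂ : ℝ,
      (μ {ω | X₁ ω ≤ x₁ ∧ X₂ ω ≤ x₂}).toReal
        = paretoCDF α x₁ * paretoCDF α x₂
            * (1 + γ * (1 - paretoCDF α x₁) * (1 - paretoCDF α x₂)))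
    (x : ℝ) : (μ {ω | X₁ ω ≤ x}).toReal = paretoCDF α x := by
  set A : ℕ → Set Ω := fun n => {ω | X₁ ω ≤ x ∧ X₂ ω ≤ n} with hA
  have hmono : Monotone A := by
    intro m n hmn ω hω
    exact ⟨hω.1, hω.2.trans (by exact_mod_cast Nat.cast_le.mpr hmn)⟩
  have hU : ⋃ n, A n = {ω | X₁ ω ≤ x} := by
    ext ω
    simp only [Set.mem_iUnion, hA, Set.mem_setOf_eq]
    constructor
    · rintro ⟨n, h, _⟩; exact h
    · intro h
      obtain ⟨n, hn⟩ := exists_nat_ge (X₂ ω)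
      exact ⟨n, h, hn⟩
  have hlim : Tendsto (fun n => μ (A n)) atTop (𝓝 (μ {ω | X₁ ω ≤ x})) := by
    rw [← hU]
    exact tendsto_measure_iUnion_atTop hmono
  have hlim' : Tendsto (fun n => (μ (A n)).toReal) atTop (𝓝 ((μ {ω | X₁ ω ≤ x}).toReal)) :=
    (ENNReal.tendsto_toReal (measure_ne_top μ _)).comp hlim
  have hlim2 : Tendsto (fun n : ℕ => (μ (A n)).toReal) atTop (𝓝 (paretoCDF α x)) := by
    have : (fun n : ℕ => (μ (A n)).toReal)
        = fun n : ℕ => paretoCDF α x * paretoCDF α n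
            * (1 + γ * (1 - paretoCDF α x) * (1 - paretoCDF α n)) := by
      funext n; exact hcdf x n
    rw [this]
    have hF := tendsto_paretoCDF_atTop (α := α) hα
    have : Tendsto (fun n : ℕ => paretoCDF α x * paretoCDF α n
        * (1 + γ * (1 - paretoCDF α x) * (1 - paretoCDF α n))) atTop
        (𝓝 (paretoCDF α x * 1 * (1 + γ * (1 - paretoCDF α x) * (1 - 1)))) := by
      exact (tendsto_const_nhds.mul hF).mul
        (tendsto_const_nhds.add ((tendsto_const_nhds).mul (tendsto_const_nhds.sub hF)))
    simpa using this
  exact tendsto_nhds_unique hlim' hlim2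

lemma tail_eq {Ω : Type*} [MeasurableSpace Ω] (μ : Measure Ω) [IsProbabilityMeasure μ]
    (X : Ω → ℝ) (hX : Measurable X) (x F : ℝ)
    (hF : (μ {ω | X ω ≤ x}).toReal = F) :
    (μ {ω | x < X ω}).toReal = 1 - F := by
  have hm : MeasurableSet {ω | X ω ≤ x} := hX measurableSet_Iic
  have hc : {ω | x < X ω} = {ω | X ω ≤ x}ᶜ := by
    ext ω; simp [not_le]
  rw [hc, measure_compl hm (measure_ne_top μ _), measure_univ,
    ENNReal.toReal_sub_of_le prob_le_one ENNReal.one_ne_top, hF]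
  simp

lemma joint_tail_eq {Ω : Type*} [MeasurableSpace Ω] (μ : Measure Ω) [IsProbabilityMeasure μ]
    (X₁ X₂ : Ω → ℝ) (hX₁ : Measurable X₁) (hX₂ : Measurable X₂) (t F₁ F₂ H : ℝ)
    (hF₁ : (μ {ω | X₁ ω ≤ t}).toReal = F₁) (hF₂ : (μ {ω | X₂ ω ≤ t}).toReal = F₂)
    (hH : (μ {ω | X₁ ω ≤ t ∧ X₂ ω ≤ t}).toReal = H) :
    (μ {ω | t < X₁ ω ∧ t < X₂ ω}).toReal = 1 - F₁ - F₂ + H := by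
  set A := {ω | X₁ ω ≤ t}
  set B := {ω | X₂ ω ≤ t}
  have hmA : MeasurableSet A := hX₁ measurableSet_Iic
  have hmB : MeasurableSet B := hX₂ measurableSet_Iic
  have hAB : {ω | X₁ ω ≤ t ∧ X₂ ω ≤ t} = A ∩ B := rfl
  have hcompl : {ω | t < X₁ ω ∧ t < X₂ ω} = (A ∪ B)ᶜ := by
    ext ω; simp [A, B, not_le, Set.mem_setOf_eq]
  have hinc : μ (A ∪ B) + μ (A ∩ B) = μ A + μ B := measure_union_add_inter A hmB
  have hinc' : (μ (A ∪ B)).toReal + (μ (A ∩ B)).toReal = (μ A).toReal + (μ B).toReal := by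
    rw [← ENNReal.toReal_add (measure_ne_top μ _) (measure_ne_top μ _),
      ← ENNReal.toReal_add (measure_ne_top μ _) (measure_ne_top μ _), hinc]
  have hcr : (μ (A ∪ B)ᶜ).toReal = 1 - (μ (A ∪ B)).toReal := by
    rw [measure_compl (hmA.union hmB) (measure_ne_top μ _), measure_univ,
      ENNReal.toReal_sub_of_le prob_le_one ENNReal.one_ne_top]
    simp
  rw [hcompl, hcr]
  rw [hAB] at hH
  linarith [hinc']

set_option maxHeartbeats 1000000

/-- For `α > 1` and `(X₁, X₂)` with the bivariate EFGM joint distribution with parameter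
`γ` and Pareto(α) marginals, there is `q₀ ∈ (0,1)` such that for all loss probabilities
`q ∈ (0, q₀)`, `VaR_q((X₁+X₂)/2) < VaR_q(X₁)`: diversification strictly decreases VaR. -/
theorem EFGM_diversification_decreases_VaR {Ω : Type*} [MeasurableSpace Ω]
    (μ : Measure Ω) [IsProbabilityMeasure μ] (α γ : ℝ) (hα : 1 < α)
    (hγ : γ ∈ Set.Icc (-1 : ℝ) 1)
    (X₁ X₂ : Ω → ℝ) (hX₁ : Measurable X₁) (hX₂ : Measurable X₂)
    (hcdf : ∀ x₁ x₂ : ℝ,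
      (μ {ω | X₁ ω ≤ x₁ ∧ X₂ ω ≤ x₂}).toReal
        = paretoCDF α x₁ * paretoCDF α x₂
            * (1 + γ * (1 - paretoCDF α x₁) * (1 - paretoCDF α x₂))) :
    ∃ q₀ : ℝ, q₀ ∈ Set.Ioo (0 : ℝ) 1 ∧ ∀ q : ℝ, q ∈ Set.Ioo (0 : ℝ) q₀ →
      lossVaR μ (fun ω => (X₁ ω + X₂ ω) / 2) q < lossVaR μ X₁ q := by
  have hα0 : 0 < α := by linarith
  have hcdf' : ∀ x₁ x₂ : ℝ,
      (μ {ω | X₂ ω ≤ x₁ ∧ X₁ ω ≤ x₂}).toReal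
        = paretoCDF α x₁ * paretoCDF α x₂
            * (1 + γ * (1 - paretoCDF α x₁) * (1 - paretoCDF α x₂)) := by
    intro x₁ x₂
    have he : {ω | X₂ ω ≤ x₁ ∧ X₁ ω ≤ x₂} = {ω | X₁ ω ≤ x₂ ∧ X₂ ω ≤ x₁} := by
      ext ω; exact and_comm
    rw [he, hcdf x₂ x₁]; ring
  have marg1 : ∀ x, (μ {ω | X₁ ω ≤ x}).toReal = paretoCDF α x :=
    marginal_eq μ hα0 X₁ X₂ hcdf
  have marg2 : ∀ x, (μ {ω | X₂ ω ≤ x}).toReal = paretoCDF α x :=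
    marginal_eq μ hα0 X₂ X₁ hcdf'
  have tail1 : ∀ x, (μ {ω | x < X₁ ω}).toReal = 1 - paretoCDF α x :=
    fun x => tail_eq μ X₁ hX₁ x _ (marg1 x)
  have tail2 : ∀ x, (μ {ω | x < X₂ ω}).toReal = 1 - paretoCDF α x :=
    fun x => tail_eq μ X₂ hX₂ x _ (marg2 x)
  have jt : ∀ t, (μ {ω | t < X₁ ω ∧ t < X₂ ω}).toReal
      = 1 - paretoCDF α t - paretoCDF α t
        + paretoCDF α t * paretoCDF α t
            * (1 + γ * (1 - paretoCDF α t) * (1 - paretoCDF α t)) :=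
    fun t => joint_tail_eq μ X₁ X₂ hX₁ hX₂ t _ _ _ (marg1 t) (marg2 t) (hcdf t t)
  -- null sets below 1
  have hnull : ∀ (X : Ω → ℝ), (∀ x, (μ {ω | X ω ≤ x}).toReal = paretoCDF α x) →
      μ {ω | X ω < 1} = 0 := by
    intro X hm
    have hU : {ω | X ω < 1} = ⋃ n : ℕ, {ω | X ω ≤ 1 - ((n : ℝ) + 1)⁻¹} := by
      ext ω
      simp only [Set.mem_setOf_eq, Set.mem_iUnion]
      constructor
      · intro h
        obtain ⟨n, hn⟩ := exists_nat_one_div_lt (by linarith : (0:ℝ) < 1 - X ω)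
        refine ⟨n, ?_⟩
        rw [one_div] at hn
        linarith
      · rintro ⟨n, hn⟩
        have : (0:ℝ) < ((n : ℝ) + 1)⁻¹ := by positivity
        linarith
    rw [hU]
    refine measure_iUnion_null fun n => ?_
    have h0 : (μ {ω | X ω ≤ 1 - ((n : ℝ) + 1)⁻¹}).toReal = 0 := by
      rw [hm, paretoCDF_of_lt]
      have : (0:ℝ) < ((n : ℝ) + 1)⁻¹ := by positivity
      linarith
    exact ((ENNReal.toReal_eq_zero_iff _).mp h0).resolve_right (measure_ne_top μ _)
  -- constants
  set a : ℝ := 2 ^ (α⁻¹) with hadef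
  have ha1 : 1 < a := by
    rw [hadef]
    exact Real.one_lt_rpow_iff_of_pos (by norm_num) |>.mpr
      (Or.inl ⟨one_lt_two, by positivity⟩)
  have ha2 : a < 2 := by
    have := Real.rpow_lt_rpow_of_exponent_lt (x := 2) one_lt_two
      (show α⁻¹ < 1 by rw [inv_lt_one_iff₀]; right; exact hα)
    simpa [hadef] using this
  have haα : a ^ (-α) = 1 / 2 := by
    rw [hadef, ← Real.rpow_mul (by norm_num : (0:ℝ) ≤ 2)]
    have h : α⁻¹ * -α = -1 := by field_simp
    rw [h, Real.rpow_neg_one]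
    norm_num
  set δ : ℝ := (2 - a) / 4 with hδdef
  set b : ℝ := (3 * a + 2) / 4 with hbdef
  set c : ℝ := (a + 2) / 4 with hcdef
  have hδ0 : 0 < δ := by rw [hδdef]; linarith
  have hb1 : 1 < b := by rw [hbdef]; linarith
  have hc1 : c < 1 := by rw [hcdef]; linarith
  have hab : a < b := by rw [hbdef]; linarith
  set K : ℝ := b ^ (-α) with hKdef
  have hK0 : 0 < K := Real.rpow_pos_of_pos (by linarith) _
  have hKhalf : K < 1 / 2 := by
    rw [hKdef, ← haα]
    exact Real.rpow_lt_rpow_of_neg (by linarith) hab (by linarith)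
  set Q : ℝ := δ ^ α with hQdef
  set P : ℝ := δ ^ (-α) with hPdef
  have hQ0 : 0 < Q := Real.rpow_pos_of_pos hδ0 _
  have hP0 : 0 < P := Real.rpow_pos_of_pos hδ0 _
  have hPQ : P * Q = 1 := by
    rw [hPdef, hQdef, ← Real.rpow_add hδ0]
    simp
  refine ⟨min (min ((1 - 2 * K) * Q ^ 2 / 2) Q) (1 / 2), ⟨?_, ?_⟩, ?_⟩
  · apply lt_min (lt_min ?_ hQ0) (by norm_num)
    have : 0 < 1 - 2 * K := by linarith
    positivity
  · exact lt_of_le_of_lt (min_le_right _ _) (by norm_num)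
  intro q ⟨hq0, hq1⟩
  have hqK : q ≤ (1 - 2 * K) * Q ^ 2 / 2 :=
    le_of_lt (lt_of_lt_of_le hq1 ((min_le_left _ _).trans (min_le_left _ _)))
  have hqQ : q < Q := lt_of_lt_of_le hq1 ((min_le_left _ _).trans (min_le_right _ _))
  have hqhalf : q < 1 / 2 := lt_of_lt_of_le hq1 (min_le_right _ _)
  set u : ℝ := q ^ (-α⁻¹) with hudef
  have hu1 : 1 < u := by
    rw [hudef]
    exact Real.one_lt_rpow_iff_of_pos hq0 |>.mpr
      (Or.inr ⟨by linarith, neg_lt_zero.mpr (by positivity)⟩)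
  have hu0 : 0 < u := by linarith
  have huα : u ^ (-α) = q := by
    rw [hudef, ← Real.rpow_mul hq0.le]
    have h : -α⁻¹ * -α = 1 := by field_simp
    rw [h, Real.rpow_one]
  -- t := δ * u ≥ 1
  have htu1 : 1 < δ * u := by
    by_contra h
    push_neg at h
    have h2 : (δ * u) ^ (-α) ≥ (1:ℝ) ^ (-α) :=
      Real.rpow_le_rpow_of_nonpos (by positivity) h (by linarith)
    rw [Real.one_rpow] at h2
    have h3 : (δ * u) ^ (-α) = P * q := by
      rw [Real.mul_rpow hδ0.le hu0.le, huα, hPdef]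
    have h4 : P * q < P * Q := by
      exact mul_lt_mul_of_pos_left hqQ hP0
    rw [hPQ] at h4
    rw [h3] at h2
    linarith
  have hbu1 : 1 < b * u := by nlinarith
  -- tails
  have htails : ∀ (X : Ω → ℝ), (∀ x, (μ {ω | x < X ω}).toReal = 1 - paretoCDF α x) →
      (μ {ω | b * u < X ω}).toReal = K * q := by
    intro X ht
    rw [ht, paretoCDF_of_ge hbu1.le, Real.mul_rpow (by linarith) hu0.le, huα, hKdef]
    ring
  have htail1 := htails X₁ tail1
  have htail2 := htails X₂ tail2
  -- joint tail bound
  have hjt : (μ {ω | δ * u < X₁ ω ∧ δ * u < X₂ ω}).toReal ≤ 2 * (P * q) ^ 2 := by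
    rw [jt, paretoCDF_of_ge htu1.le]
    have hp : (δ * u) ^ (-α) = P * q := by
      rw [Real.mul_rpow hδ0.le hu0.le, huα, hPdef]
    rw [hp]
    have hp0 : 0 ≤ P * q := by positivity
    have hp1 : P * q ≤ 1 := by
      nlinarith [mul_lt_mul_of_pos_left hqQ hP0]
    obtain ⟨hγ1, hγ2⟩ := hγ
    nlinarith [mul_nonneg (mul_nonneg (sub_nonneg.mpr hγ2) (sq_nonneg (P * q))) (sq_nonneg (1 - P * q)),
      mul_nonneg (mul_nonneg hp0 hp0) (mul_nonneg hp0 (by linarith : (0:ℝ) ≤ 2 - P * q))]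
  -- union bound
  set T : Set Ω := {ω | c * u < (X₁ ω + X₂ ω) / 2} with hTdef
  have hincl : T ⊆ ({ω | b * u < X₁ ω} ∪ {ω | b * u < X₂ ω})
      ∪ {ω | δ * u < X₁ ω ∧ δ * u < X₂ ω} := by
    intro ω hω
    simp only [hTdef, Set.mem_setOf_eq] at hω
    by_cases h1 : b * u < X₁ ω
    · exact Or.inl (Or.inl h1)
    by_cases h2 : b * u < X₂ ω
    · exact Or.inl (Or.inr h2)
    push_neg at h1 h2
    have hkey : 2 * (c * u) = b * u + δ * u := by
      rw [hbdef, hcdef, hδdef]; ring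
    exact Or.inr ⟨by linarith, by linarith⟩
  have hTbound : (μ T).toReal ≤ K * q + K * q + 2 * (P * q) ^ 2 := by
    have hsub : μ T ≤ μ {ω | b * u < X₁ ω} + μ {ω | b * u < X₂ ω}
        + μ {ω | δ * u < X₁ ω ∧ δ * u < X₂ ω} :=
      (measure_mono hincl).trans ((measure_union_le _ _).trans
        (add_le_add_left (measure_union_le _ _) _))
    have hne : μ {ω | b * u < X₁ ω} + μ {ω | b * u < X₂ ω}
        + μ {ω | δ * u < X₁ ω ∧ δ * u < X₂ ω} ≠ ⊤ :=
      ENNReal.add_ne_top.mpr ⟨ENNReal.add_ne_top.mpr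
        ⟨measure_ne_top μ _, measure_ne_top μ _⟩, measure_ne_top μ _⟩
    have := ENNReal.toReal_mono hne hsub
    rw [ENNReal.toReal_add (ENNReal.add_ne_top.mpr
        ⟨measure_ne_top μ _, measure_ne_top μ _⟩) (measure_ne_top μ _),
      ENNReal.toReal_add (measure_ne_top μ _) (measure_ne_top μ _),
      htail1, htail2] at this
    linarith [hjt]
  have hTq : (μ T).toReal ≤ q := by
    have e1 : P ^ 2 * Q ^ 2 = 1 := by rw [← mul_pow, hPQ, one_pow]
    have h2 : 2 * P ^ 2 * q ≤ 1 - 2 * K := by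
      have h3 := mul_le_mul_of_nonneg_left hqK (le_of_lt (by positivity : (0:ℝ) < 2 * P ^ 2))
      have h4 : 2 * P ^ 2 * ((1 - 2 * K) * Q ^ 2 / 2) = (1 - 2 * K) * (P ^ 2 * Q ^ 2) := by ring
      rw [h4, e1, mul_one] at h3
      exact h3
    have h1 : 2 * (P * q) ^ 2 ≤ (1 - 2 * K) * q := by
      calc 2 * (P * q) ^ 2 = (2 * P ^ 2 * q) * q := by ring
        _ ≤ (1 - 2 * K) * q := mul_le_mul_of_nonneg_right h2 hq0.le
    linarith [hTbound]
  -- VaR of the sum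
  have hVaRS : lossVaR μ (fun ω => (X₁ ω + X₂ ω) / 2) q ≤ c * u := by
    apply csInf_le
    · refine ⟨1, fun y hy => ?_⟩
      simp only [Set.mem_setOf_eq] at hy
      by_contra hy1
      push_neg at hy1
      have hcov : (Set.univ : Set Ω) ⊆ {ω | y < (X₁ ω + X₂ ω) / 2}
          ∪ ({ω | X₁ ω < 1} ∪ {ω | X₂ ω < 1}) := by
        intro ω _
        by_cases h1 : X₁ ω < 1
        · exact Or.inr (Or.inl h1)
        by_cases h2 : X₂ ω < 1
        · exact Or.inr (Or.inr h2)
        push_neg at h1 h2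
        exact Or.inl (by simp only [Set.mem_setOf_eq]; linarith)
      have h1 : (1 : ENNReal) ≤ μ ({ω | y < (X₁ ω + X₂ ω) / 2}
          ∪ ({ω | X₁ ω < 1} ∪ {ω | X₂ ω < 1})) := by
        rw [← measure_univ (μ := μ)]
        exact measure_mono hcov
      have h2 : μ ({ω | X₁ ω < 1} ∪ {ω | X₂ ω < 1}) = 0 :=
        measure_union_null (hnull X₁ marg1) (hnull X₂ marg2)
      have h3 : (1 : ENNReal) ≤ μ {ω | y < (X₁ ω + X₂ ω) / 2} :=
        h1.trans ((measure_union_le _ _).trans (by rw [h2, add_zero]))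
      have h4 : (1:ℝ) ≤ (μ {ω | y < (X₁ ω + X₂ ω) / 2}).toReal := by
        have := ENNReal.toReal_mono (measure_ne_top μ _) h3
        simpa using this
      linarith
    · show (μ {ω | c * u < (X₁ ω + X₂ ω) / 2}).toReal ≤ q
      exact hTq
  -- VaR of X₁
  have hVaR1 : u ≤ lossVaR μ X₁ q := by
    apply le_csInf
    · refine ⟨u, ?_⟩
      show (μ {ω | u < X₁ ω}).toReal ≤ q
      rw [tail1, paretoCDF_of_ge hu1.le, huα]
      ring_nf
      linarith
    · intro y hy
      simp only [Set.mem_setOf_eq] at hy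
      by_contra hyu
      push_neg at hyu
      rcases lt_or_ge y 1 with hy1 | hy1
      · rw [tail1, paretoCDF_of_lt hy1] at hy
        linarith
      · rw [tail1, paretoCDF_of_ge hy1] at hy
        have : u ^ (-α) < y ^ (-α) :=
          Real.rpow_lt_rpow_of_neg (by linarith) hyu (by linarith)
        rw [huα] at this
        linarith
  calc lossVaR μ (fun ω => (X₁ ω + X₂ ω) / 2) q ≤ c * u := hVaRS
    _ < u := by nlinarith
    _ ≤ lossVaR μ X₁ q := hVaR1
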